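/- arXiv:1905.08049 — 6 statements merged into one kernel-verified Lean document; each statement's English description precedes it below -/
import Mathlib

section
/- The map ι : G_n^2 → G_{n,P}^2 defined on generators by ι(a_{ij}) = a_{ij}^0 is an injective group homomorphism. -/
/-- Index type for the generators `a_{ij}`: two-element subsets of `Fin n`. -/
abbrev PairIdx (n : ℕ) := {s : Finset (Fin n) // s.card = 2}

/-- The unordered pair `{i,j}` as an index. -/
def mkPair {n : ℕ} (i j : Fin n) (h : i ≠ j) : PairIdx n := ⟨{i, j}, Finset.card_pair h⟩

/-- Relations of the group `G_n^2`. -/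
def gn2Rels (n : ℕ) : Set (FreeGroup (PairIdx n)) :=
  {r | (∃ (i j : Fin n) (h : i ≠ j),
          r = FreeGroup.of (mkPair i j h) * FreeGroup.of (mkPair i j h)) ∨
       (∃ (i j k l : Fin n) (hij : i ≠ j) (hkl : k ≠ l),
          i ≠ k ∧ i ≠ l ∧ j ≠ k ∧ j ≠ l ∧
          r = FreeGroup.of (mkPair i j hij) * FreeGroup.of (mkPair k l hkl) *
              (FreeGroup.of (mkPair i j hij))⁻¹ * (FreeGroup.of (mkPair k l hkl))⁻¹) ∨
       (∃ (i j k : Fin n) (hij : i ≠ j) (hik : i ≠ k) (hjk : j ≠ k),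
          r = FreeGroup.of (mkPair i j hij) * FreeGroup.of (mkPair i k hik) *
              FreeGroup.of (mkPair j k hjk) *
              (FreeGroup.of (mkPair j k hjk) * FreeGroup.of (mkPair i k hik) *
               FreeGroup.of (mkPair i j hij))⁻¹)}

/-- The group `G_n^2`. -/
abbrev Gn2 (n : ℕ) := PresentedGroup (gn2Rels n)

/-- The generator `a_{ij}` of `G_n^2`. -/
def A2 {n : ℕ} (i j : Fin n) (h : i ≠ j) : Gn2 n := PresentedGroup.of (mkPair i j h)

/-- Relations of the group `G_{n,P}^2` (`G_n^2` with parity). -/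
def gnP2Rels (n : ℕ) : Set (FreeGroup (PairIdx n × ZMod 2)) :=
  {r | (∃ (i j : Fin n) (h : i ≠ j) (ε : ZMod 2),
          r = FreeGroup.of (mkPair i j h, ε) * FreeGroup.of (mkPair i j h, ε)) ∨
       (∃ (i j k l : Fin n) (hij : i ≠ j) (hkl : k ≠ l) (ε₁ ε₂ : ZMod 2),
          i ≠ k ∧ i ≠ l ∧ j ≠ k ∧ j ≠ l ∧
          r = FreeGroup.of (mkPair i j hij, ε₁) * FreeGroup.of (mkPair k l hkl, ε₂) *
              (FreeGroup.of (mkPair i j hij, ε₁))⁻¹ * (FreeGroup.of (mkPair k l hkl, ε₂))⁻¹) ∨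
       (∃ (i j k : Fin n) (hij : i ≠ j) (hik : i ≠ k) (hjk : j ≠ k)
          (εij εik εjk : ZMod 2), εij + εik + εjk = 0 ∧
          r = FreeGroup.of (mkPair i j hij, εij) * FreeGroup.of (mkPair i k hik, εik) *
              FreeGroup.of (mkPair j k hjk, εjk) *
              (FreeGroup.of (mkPair j k hjk, εjk) * FreeGroup.of (mkPair i k hik, εik) *
               FreeGroup.of (mkPair i j hij, εij))⁻¹)}

/-- The group `G_{n,P}^2`. -/
abbrev GnP2 (n : ℕ) := PresentedGroup (gnP2Rels n)

/-- The generator `a_{ij}^ε` of `G_{n,P}^2`. -/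
def AP {n : ℕ} (i j : Fin n) (h : i ≠ j) (ε : ZMod 2) : GnP2 n :=
  PresentedGroup.of (mkPair i j h, ε)

/-- Alphabet of `G_{n,D}^2`: crossing generators `a_{ij}` and point generators `τ_i`. -/
abbrev DIdx (n : ℕ) := PairIdx n ⊕ Fin n

/-- Relations of the group `G_{n,D}^2` (`G_n^2` with points). -/
def gnD2Rels (n : ℕ) : Set (FreeGroup (DIdx n)) :=
  {r | (∃ (i j : Fin n) (h : i ≠ j),
          r = FreeGroup.of (Sum.inl (mkPair i j h) : DIdx n) *
              FreeGroup.of (Sum.inl (mkPair i j h) : DIdx n)) ∨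
       (∃ (i j k l : Fin n) (hij : i ≠ j) (hkl : k ≠ l),
          i ≠ k ∧ i ≠ l ∧ j ≠ k ∧ j ≠ l ∧
          r = FreeGroup.of (Sum.inl (mkPair i j hij) : DIdx n) *
              FreeGroup.of (Sum.inl (mkPair k l hkl) : DIdx n) *
              (FreeGroup.of (Sum.inl (mkPair i j hij) : DIdx n))⁻¹ *
              (FreeGroup.of (Sum.inl (mkPair k l hkl) : DIdx n))⁻¹) ∨
       (∃ (i j k : Fin n) (hij : i ≠ j) (hik : i ≠ k) (hjk : j ≠ k),
          r = FreeGroup.of (Sum.inl (mkPair i j hij) : DIdx n) *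
              FreeGroup.of (Sum.inl (mkPair i k hik) : DIdx n) *
              FreeGroup.of (Sum.inl (mkPair j k hjk) : DIdx n) *
              (FreeGroup.of (Sum.inl (mkPair j k hjk) : DIdx n) *
               FreeGroup.of (Sum.inl (mkPair i k hik) : DIdx n) *
               FreeGroup.of (Sum.inl (mkPair i j hij) : DIdx n))⁻¹) ∨
       (∃ i : Fin n,
          r = FreeGroup.of (Sum.inr i : DIdx n) * FreeGroup.of (Sum.inr i : DIdx n)) ∨
       (∃ i j : Fin n,
          r = FreeGroup.of (Sum.inr i : DIdx n) * FreeGroup.of (Sum.inr j : DIdx n) *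
              (FreeGroup.of (Sum.inr i : DIdx n))⁻¹ * (FreeGroup.of (Sum.inr j : DIdx n))⁻¹) ∨
       (∃ (i j : Fin n) (h : i ≠ j),
          r = FreeGroup.of (Sum.inr i : DIdx n) * FreeGroup.of (Sum.inr j : DIdx n) *
              FreeGroup.of (Sum.inl (mkPair i j h) : DIdx n) *
              FreeGroup.of (Sum.inr j : DIdx n) * FreeGroup.of (Sum.inr i : DIdx n) *
              (FreeGroup.of (Sum.inl (mkPair i j h) : DIdx n))⁻¹) ∨
       (∃ (i j k : Fin n) (h : i ≠ j), k ≠ i ∧ k ≠ j ∧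
          r = FreeGroup.of (Sum.inl (mkPair i j h) : DIdx n) *
              FreeGroup.of (Sum.inr k : DIdx n) *
              (FreeGroup.of (Sum.inl (mkPair i j h) : DIdx n))⁻¹ *
              (FreeGroup.of (Sum.inr k : DIdx n))⁻¹)}

/-- The group `G_{n,D}^2`. -/
abbrev GnD2 (n : ℕ) := PresentedGroup (gnD2Rels n)

/-- The generator `a_{ij}` of `G_{n,D}^2`. -/
def AD {n : ℕ} (i j : Fin n) (h : i ≠ j) : GnD2 n := PresentedGroup.of (Sum.inl (mkPair i j h))

/-- The generator `τ_i` of `G_{n,D}^2`. -/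
def T {n : ℕ} (i : Fin n) : GnD2 n := PresentedGroup.of (Sum.inr i)

namespace Gn2

def toParity (n : ℕ) : Gn2 n →* GnP2 n :=
  PresentedGroup.map (FreeGroup.map fun p => (p, 0)) <| by
    rintro r (⟨i, j, h, rfl⟩ | ⟨i, j, k, l, hij, hkl, hik, hil, hjk, hjl, rfl⟩ |
      ⟨i, j, k, hij, hik, hjk, rfl⟩)
    · exact Or.inl ⟨i, j, h, 0, by simp⟩
    · exact Or.inr <| Or.inl ⟨i, j, k, l, hij, hkl, 0, 0, hik, hil, hjk, hjl, by simp⟩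
    · exact Or.inr <| Or.inr ⟨i, j, k, hij, hik, hjk, 0, 0, 0, by simp, by simp⟩

theorem toParity_A2 {n : ℕ} (i j : Fin n) (h : i ≠ j) : toParity n (A2 i j h) = AP i j h 0 :=
  rfl

end Gn2

namespace GnP2

def forgetParity (n : ℕ) : GnP2 n →* Gn2 n :=
  PresentedGroup.map (FreeGroup.map Prod.fst) <| by
    rintro r (⟨i, j, h, ε, rfl⟩ | ⟨i, j, k, l, hij, hkl, ε₁, ε₂, hik, hil, hjk, hjl, rfl⟩ |
      ⟨i, j, k, hij, hik, hjk, εij, εik, εjk, -, rfl⟩)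
    · exact Or.inl ⟨i, j, h, by simp⟩
    · exact Or.inr <| Or.inl ⟨i, j, k, l, hij, hkl, hik, hil, hjk, hjl, by simp⟩
    · exact Or.inr <| Or.inr ⟨i, j, k, hij, hik, hjk, by simp⟩

theorem leftInverse_forgetParity_toParity (n : ℕ) :
    Function.LeftInverse (forgetParity n) (Gn2.toParity n) :=
  DFunLike.congr_fun (PresentedGroup.ext (φ := (forgetParity n).comp (Gn2.toParity n))
    (ψ := MonoidHom.id (Gn2 n)) fun _ => rfl)

end GnP2

theorem stmt0_general (n : ℕ) :
    ∃ ι : Gn2 n →* GnP2 n,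
      Function.Injective ι ∧ ∀ (i j : Fin n) (h : i ≠ j), ι (A2 i j h) = AP i j h 0 :=
  ⟨Gn2.toParity n, (GnP2.leftInverse_forgetParity_toParity n).injective, Gn2.toParity_A2⟩

/-- the map `ι : G_n^2 → G_{n,P}^2`, `a_{ij} ↦ a_{ij}^0`, is an injective
group homomorphism. -/
theorem stmt0 (n : ℕ) (hn : 2 < n) :
    ∃ ι : Gn2 n →* GnP2 n,
      Function.Injective ι ∧ ∀ (i j : Fin n) (h : i ≠ j), ι (A2 i j h) = AP i j h 0 :=
  stmt0_general n
end

section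
/- The assignment η(a_{ij}^0) = a_{ij} and η(a_{ij}^1) = τ_i a_{ij} τ_i extends to a well-defined group homomorphism η : G_{n,P}^2 → G_{n,D}^2. -/
/-!
Send `a_{ij}^ε` to the conjugate of `a_{ij}` by `τ_i ^ ε`. The square and commutation relations
of `G_{n,P}^2` survive because conjugation is a homomorphism and the `τ`'s commute with the
`a`'s they do not meet. For the triangle relation, the relation `τ_i τ_j a_{ij} τ_j τ_i = a_{ij}`
says that conjugating `a_{ij}` by `τ_i` or by `τ_j` gives the same element. Hence if the parities
on a triangle `ijk` sum to zero, the three images are the conjugates of `a_{ij}, a_{ik}, a_{jk}`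
by a single element: `1` if every parity is even, and otherwise `τ` of the vertex shared by the
two odd edges. The relation then follows from the triangle relation of `G_{n,D}^2`.
-/

theorem Commute.conj_conj {G : Type*} [Group G] {g a h b : G} (hgh : Commute g h)
    (hgb : Commute g b) (hah : Commute a h) (hab : Commute a b) :
    Commute (MulAut.conj g a) (MulAut.conj h b) := by
  have hg : Commute g (MulAut.conj h b) := (hgh.mul_right hgb).mul_right hgh.inv_right
  have ha : Commute a (MulAut.conj h b) := (hah.mul_right hab).mul_right hah.inv_right
  exact (hg.mul_left ha).mul_left hg.inv_left

namespace GnD2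

variable {n : ℕ}

theorem AD_mul_self (i j : Fin n) (h : i ≠ j) : AD i j h * AD i j h = 1 :=
  PresentedGroup.one_of_mem (Or.inl ⟨i, j, h, rfl⟩)

theorem AD_commute_AD {i j k l : Fin n} (hij : i ≠ j) (hkl : k ≠ l)
    (hik : i ≠ k) (hil : i ≠ l) (hjk : j ≠ k) (hjl : j ≠ l) :
    Commute (AD i j hij) (AD k l hkl) :=
  commutatorElement_eq_one_iff_mul_comm.mp <| PresentedGroup.one_of_mem <|
    Or.inr (Or.inl ⟨i, j, k, l, hij, hkl, hik, hil, hjk, hjl, rfl⟩)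

theorem AD_triangle {i j k : Fin n} (hij : i ≠ j) (hik : i ≠ k) (hjk : j ≠ k) :
    AD i j hij * AD i k hik * AD j k hjk = AD j k hjk * AD i k hik * AD i j hij :=
  PresentedGroup.mk_eq_mk_of_mul_inv_mem <|
    Or.inr (Or.inr (Or.inl ⟨i, j, k, hij, hik, hjk, rfl⟩))

theorem T_mul_self (i : Fin n) : T i * T i = 1 :=
  PresentedGroup.one_of_mem (Or.inr (Or.inr (Or.inr (Or.inl ⟨i, rfl⟩))))

theorem T_inv (i : Fin n) : (T i)⁻¹ = T i :=
  inv_eq_of_mul_eq_one_right (T_mul_self i)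

theorem T_commute_T (i j : Fin n) : Commute (T i) (T j) :=
  commutatorElement_eq_one_iff_mul_comm.mp <| PresentedGroup.one_of_mem <|
    Or.inr (Or.inr (Or.inr (Or.inr (Or.inl ⟨i, j, rfl⟩))))

theorem T_T_AD_T_T (i j : Fin n) (h : i ≠ j) : T i * T j * AD i j h * T j * T i = AD i j h :=
  PresentedGroup.mk_eq_mk_of_mul_inv_mem <|
    Or.inr (Or.inr (Or.inr (Or.inr (Or.inr (Or.inl ⟨i, j, h, rfl⟩)))))

theorem T_commute_AD {k i j : Fin n} (h : i ≠ j) (hki : k ≠ i) (hkj : k ≠ j) :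
    Commute (T k) (AD i j h) :=
  (commutatorElement_eq_one_iff_mul_comm.mp <| PresentedGroup.one_of_mem <|
    Or.inr (Or.inr (Or.inr (Or.inr (Or.inr (Or.inr ⟨i, j, k, h, hki, hkj, rfl⟩)))))).symm

theorem conj_T_AD_of_ne {k i j : Fin n} (h : i ≠ j) (hki : k ≠ i) (hkj : k ≠ j) :
    MulAut.conj (T k) (AD i j h) = AD i j h := by
  rw [MulAut.conj_apply, (T_commute_AD h hki hkj).eq, mul_inv_cancel_right]

theorem conj_T_right_AD (i j : Fin n) (h : i ≠ j) :
    MulAut.conj (T j) (AD i j h) = MulAut.conj (T i) (AD i j h) := by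
  have hji : T j * T i * T j = T i := by
    rw [(T_commute_T j i).eq, mul_assoc, T_mul_self, mul_one]
  calc MulAut.conj (T j) (AD i j h)
      = MulAut.conj (T j) (T i * T j * AD i j h * T j * T i) := by rw [T_T_AD_T_T]
    _ = (T j * T i * T j) * AD i j h * (T j * T i * T j) := by
      simp only [MulAut.conj_apply, T_inv, mul_assoc]
    _ = MulAut.conj (T i) (AD i j h) := by rw [hji, MulAut.conj_apply, T_inv]

end GnD2

open GnD2

variable {n : ℕ}

/-- An endpoint of an edge; which one does not matter, by `GnD2.conj_T_right_AD`. -/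
def PairIdx.vertex (s : PairIdx n) : Fin n :=
  s.1.min' (Finset.card_pos.mp (by rw [s.2]; norm_num))

/-- The image of the generator `a_s^ε` of `G_{n,P}^2` under `η`. -/
def etaGen (x : PairIdx n × ZMod 2) : GnD2 n :=
  MulAut.conj (T x.1.vertex ^ x.2.val) (PresentedGroup.of (Sum.inl x.1))

theorem etaGen_mkPair (i j : Fin n) (h : i ≠ j) (ε : ZMod 2) :
    etaGen (mkPair i j h, ε) = MulAut.conj (T i ^ ε.val) (AD i j h) := by
  have hv : (mkPair i j h).vertex ∈ ({i, j} : Finset (Fin n)) := Finset.min'_mem _ _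
  rw [Finset.mem_insert, Finset.mem_singleton] at hv
  fin_cases ε
  · rfl
  · rcases hv with hv | hv
    · simp only [etaGen, hv]; rfl
    · simp only [etaGen, hv]
      exact conj_T_right_AD i j h

theorem etaGen_zero (i j : Fin n) (h : i ≠ j) : etaGen (mkPair i j h, 0) = AD i j h := by
  rw [etaGen_mkPair, ZMod.val_zero, pow_zero, map_one, MulAut.one_apply]

theorem etaGen_one (i j : Fin n) (h : i ≠ j) :
    etaGen (mkPair i j h, 1) = MulAut.conj (T i) (AD i j h) := by
  rw [etaGen_mkPair, ZMod.val_one, pow_one]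

theorem etaGen_one_eq_conj_T_right (i j : Fin n) (h : i ≠ j) :
    etaGen (mkPair i j h, 1) = MulAut.conj (T j) (AD i j h) := by
  rw [etaGen_one, conj_T_right_AD]

theorem etaGen_mul_self (i j : Fin n) (h : i ≠ j) (ε : ZMod 2) :
    etaGen (mkPair i j h, ε) * etaGen (mkPair i j h, ε) = 1 := by
  rw [etaGen_mkPair, ← map_mul, AD_mul_self, map_one]

theorem etaGen_commute {i j k l : Fin n} (hij : i ≠ j) (hkl : k ≠ l)
    (hik : i ≠ k) (hil : i ≠ l) (hjk : j ≠ k) (hjl : j ≠ l) (ε₁ ε₂ : ZMod 2) :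
    Commute (etaGen (mkPair i j hij, ε₁)) (etaGen (mkPair k l hkl, ε₂)) := by
  rw [etaGen_mkPair, etaGen_mkPair]
  exact Commute.conj_conj ((T_commute_T i k).pow_pow _ _)
    ((T_commute_AD hkl hik hil).pow_left _)
    ((T_commute_AD hij hik.symm hjk.symm).symm.pow_right _)
    (AD_commute_AD hij hkl hik hil hjk hjl)

theorem ZMod.two_cases_of_add_add_eq_zero {a b c : ZMod 2} (h : a + b + c = 0) :
    (a = 0 ∧ b = 0 ∧ c = 0) ∨ (a = 1 ∧ b = 1 ∧ c = 0) ∨ (a = 1 ∧ b = 0 ∧ c = 1) ∨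
      (a = 0 ∧ b = 1 ∧ c = 1) := by
  revert a b c; decide

theorem exists_etaGen_triangle_eq_conj {i j k : Fin n} (hij : i ≠ j) (hik : i ≠ k) (hjk : j ≠ k)
    {εij εik εjk : ZMod 2} (hε : εij + εik + εjk = 0) :
    ∃ g : GnD2 n, etaGen (mkPair i j hij, εij) = MulAut.conj g (AD i j hij) ∧
      etaGen (mkPair i k hik, εik) = MulAut.conj g (AD i k hik) ∧
      etaGen (mkPair j k hjk, εjk) = MulAut.conj g (AD j k hjk) := by
  rcases ZMod.two_cases_of_add_add_eq_zero hε with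
    ⟨rfl, rfl, rfl⟩ | ⟨rfl, rfl, rfl⟩ | ⟨rfl, rfl, rfl⟩ | ⟨rfl, rfl, rfl⟩
  · exact ⟨1, by simp only [etaGen_zero, map_one, MulAut.one_apply, and_self]⟩
  · exact ⟨T i, etaGen_one .., etaGen_one .., by rw [etaGen_zero, conj_T_AD_of_ne _ hij hik]⟩
  · exact ⟨T j, etaGen_one_eq_conj_T_right .., by rw [etaGen_zero, conj_T_AD_of_ne _ hij.symm hjk],
      etaGen_one ..⟩
  · exact ⟨T k, by rw [etaGen_zero, conj_T_AD_of_ne _ hik.symm hjk.symm],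
      etaGen_one_eq_conj_T_right .., etaGen_one_eq_conj_T_right ..⟩

theorem etaGen_triangle {i j k : Fin n} (hij : i ≠ j) (hik : i ≠ k) (hjk : j ≠ k)
    {εij εik εjk : ZMod 2} (hε : εij + εik + εjk = 0) :
    etaGen (mkPair i j hij, εij) * etaGen (mkPair i k hik, εik) * etaGen (mkPair j k hjk, εjk) =
      etaGen (mkPair j k hjk, εjk) * etaGen (mkPair i k hik, εik) *
        etaGen (mkPair i j hij, εij) := by
  obtain ⟨g, h₁, h₂, h₃⟩ := exists_etaGen_triangle_eq_conj hij hik hjk hε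
  rw [h₁, h₂, h₃, ← map_mul, ← map_mul, ← map_mul, ← map_mul, AD_triangle]

theorem lift_etaGen_eq_one_of_mem_rels {r : FreeGroup (PairIdx n × ZMod 2)}
    (hr : r ∈ gnP2Rels n) : FreeGroup.lift etaGen r = 1 := by
  rcases hr with ⟨i, j, h, ε, rfl⟩ | ⟨i, j, k, l, hij, hkl, ε₁, ε₂, hik, hil, hjk, hjl, rfl⟩ |
    ⟨i, j, k, hij, hik, hjk, εij, εik, εjk, hε, rfl⟩
  · simpa only [map_mul, FreeGroup.lift_apply_of] using etaGen_mul_self i j h ε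
  · simpa only [map_mul, map_inv, FreeGroup.lift_apply_of, commutatorElement_def] using
      commutatorElement_eq_one_iff_mul_comm.mpr (etaGen_commute hij hkl hik hil hjk hjl ε₁ ε₂)
  · simpa only [map_mul, map_inv, FreeGroup.lift_apply_of] using
      mul_inv_eq_one.mpr (etaGen_triangle hij hik hjk hε)

theorem stmt2_general (n : ℕ) :
    ∃ η : GnP2 n →* GnD2 n,
      ∀ (i j : Fin n) (h : i < j),
        η (AP i j h.ne 0) = AD i j h.ne ∧
        η (AP i j h.ne 1) = T i * AD i j h.ne * T i := by
  refine ⟨PresentedGroup.toGroup fun _ ↦ lift_etaGen_eq_one_of_mem_rels, fun i j h ↦ ⟨?_, ?_⟩⟩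
  · exact (PresentedGroup.toGroup.of _).trans (etaGen_zero i j h.ne)
  · rw [AP, PresentedGroup.toGroup.of, etaGen_one, MulAut.conj_apply, T_inv]

/-- `η(a_{ij}^0) = a_{ij}`, `η(a_{ij}^1) = τ_i a_{ij} τ_i` extends to a
well-defined homomorphism `η : G_{n,P}^2 → G_{n,D}^2`. -/
theorem stmt2 (n : ℕ) (hn : 2 < n) :
    ∃ η : GnP2 n →* GnD2 n,
      ∀ (i j : Fin n) (h : i < j),
        η (AP i j h.ne 0) = AD i j h.ne ∧
        η (AP i j h.ne 1) = T i * AD i j h.ne * T i :=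
  stmt2_general n
end

section
/- The map χ : H_{n,D}^2 → G_{n,P}^2, defined on a word β = T_0 a_{i_1j_1} T_1 ⋯ T_{m-1} a_{i_mj_m} T_m (where each T_k is a product of τ's) by χ(β) = a_{i_1j_1}^{ε_1} ⋯ a_{i_mj_m}^{ε_m} with ε_k ≡ N_{i_k} + N_{j_k} mod 2, where N_{i_k} is the number of occurrences of τ_{i_k} in T_0,…,T_{k-1}, is well-defined (independent of the choice of word representing β). -/
/-- The number of occurrences of `τ_i` (with either sign) in a word over the alphabet of
`G_{n,D}^2`. -/
def tauCount {n : ℕ} (i : Fin n) (L : List (DIdx n × Bool)) : ℕ :=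
  L.countP (fun p => p.1 = Sum.inr i)

/-- The image of a word in `G_{n,D}^2`. -/
def mkD (n : ℕ) (L : List (DIdx n × Bool)) : GnD2 n :=
  PresentedGroup.mk (gnD2Rels n) (FreeGroup.mk L)

/-- The word-level map `χ`: reading a word over the alphabet of `G_{n,D}^2` from left to
right (and keeping, for each strand `i`, the running parity `N i` of the number of `τ_i`'s
seen so far), each crossing letter `a_{ij}` is sent to `a_{ij}^{N i + N j}` in `G_{n,P}^2`
and the `τ`'s are dropped. -/
def chiWord (n : ℕ) : List (DIdx n × Bool) → (Fin n → ZMod 2) → GnP2 n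
  | [], _ => 1
  | (Sum.inl s, _) :: L, N =>
      PresentedGroup.of (s, ∑ x ∈ s.1, N x) * chiWord n L N
  | (Sum.inr i, _) :: L, N =>
      chiWord n L (Function.update N i (N i + 1))

/-!
The vectors `v : Fin n → ZMod 2` act on `G_{n,P}^2` by `a_{ij}^ε ↦ a_{ij}^{ε + v i + v j}`: this
preserves the relations, since in the triple relation the three exponents change by
`2 (v i + v j + v k) = 0`. In the semidirect product `G_{n,P}^2 ⋊ (ZMod 2)^n` the elements
`a_{ij} ↦ (a_{ij}^0, 0)` and `τ_i ↦ (1, e_i)` satisfy the relations of `G_{n,D}^2`: `τ_i τ_j` and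
`τ_k` (for `k ∉ {i, j}`) act trivially on `a_{ij}^0`. Multiplying out the image of a word, the
second coordinate accumulates the parities `N` while the first one collects `a_{ij}^{N i + N j}`,
so `χ` of a word is the first coordinate of the image of the element it represents.
-/

lemma Function.update_add_eq_add_single {ι M : Type*} [DecidableEq ι] [AddZeroClass M]
    (f : ι → M) (i : ι) (a : M) : Function.update f i (f i + a) = f + Pi.single i a := by
  ext x
  rcases eq_or_ne x i with rfl | hx
  · simp
  · simp [hx]

section

open PresentedGroup SemidirectProduct

variable {n : ℕ}

def parityShiftGen (v : Fin n → ZMod 2) (p : PairIdx n × ZMod 2) : PairIdx n × ZMod 2 :=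
  (p.1, p.2 + ∑ x ∈ p.1.1, v x)

@[simp]
lemma parityShiftGen_mkPair (v : Fin n → ZMod 2) {i j : Fin n} (h : i ≠ j) (ε : ZMod 2) :
    parityShiftGen v (mkPair i j h, ε) = (mkPair i j h, ε + (v i + v j)) := by
  simp [parityShiftGen, mkPair, Finset.sum_pair h]

lemma map_parityShiftGen_mem_gnP2Rels (v : Fin n → ZMod 2) {r : FreeGroup (PairIdx n × ZMod 2)}
    (hr : r ∈ gnP2Rels n) : FreeGroup.map (parityShiftGen v) r ∈ gnP2Rels n := by
  rcases hr with ⟨i, j, h, ε, rfl⟩ | ⟨i, j, k, l, hij, hkl, ε₁, ε₂, h₁, h₂, h₃, h₄, rfl⟩ |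
    ⟨i, j, k, hij, hik, hjk, εij, εik, εjk, hε, rfl⟩
  · exact Or.inl ⟨i, j, h, ε + (v i + v j), by simp⟩
  · exact Or.inr (Or.inl ⟨i, j, k, l, hij, hkl, ε₁ + (v i + v j), ε₂ + (v k + v l),
      h₁, h₂, h₃, h₄, by simp⟩)
  · refine Or.inr (Or.inr ⟨i, j, k, hij, hik, hjk, εij + (v i + v j), εik + (v i + v k),
      εjk + (v j + v k), ?_, by simp⟩)
    linear_combination hε + (v i + v j + v k) * ZMod.natCast_self 2

def parityShift (v : Fin n → ZMod 2) : GnP2 n →* GnP2 n :=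
  PresentedGroup.map (FreeGroup.map (parityShiftGen v)) fun _ =>
    map_parityShiftGen_mem_gnP2Rels v

@[simp]
lemma parityShift_of (v : Fin n → ZMod 2) (p : PairIdx n × ZMod 2) :
    parityShift v (of p) = of (parityShiftGen v p) :=
  rfl

lemma parityShift_zero : parityShift (0 : Fin n → ZMod 2) = MonoidHom.id (GnP2 n) :=
  PresentedGroup.ext fun p => by simp [parityShiftGen]

lemma parityShift_add (v w : Fin n → ZMod 2) :
    parityShift (v + w) = (parityShift v).comp (parityShift w) :=
  PresentedGroup.ext fun p => by
    simp [parityShiftGen, Finset.sum_add_distrib, add_comm, add_left_comm]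

def parityShiftAut : Multiplicative (Fin n → ZMod 2) →* MulAut (GnP2 n) where
  toFun v := (parityShift v.toAdd).toMulEquiv (parityShift (-v.toAdd))
    (by rw [← parityShift_add, neg_add_cancel, parityShift_zero])
    (by rw [← parityShift_add, add_neg_cancel, parityShift_zero])
  map_one' := MulEquiv.ext fun x => by simp [parityShift_zero]
  map_mul' v w := MulEquiv.ext fun x => by simp [parityShift_add]

lemma parityShiftAut_apply (v : Fin n → ZMod 2) (g : GnP2 n) :
    parityShiftAut (.ofAdd v) g = parityShift v g :=
  rfl

abbrev GnP2Ext (n : ℕ) := GnP2 n ⋊[parityShiftAut] Multiplicative (Fin n → ZMod 2)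

lemma parityShift_of_mkPair_zero {v : Fin n → ZMod 2} {i j : Fin n} (h : i ≠ j)
    (hv : v i + v j = 0) :
    parityShift v (of (mkPair i j h, 0)) = of (mkPair i j h, 0) := by
  simp [hv]

namespace GnP2Ext

lemma inl_mk_eq_one {r : FreeGroup (PairIdx n × ZMod 2)} (hr : r ∈ gnP2Rels n) :
    (inl (mk _ r) : GnP2Ext n) = 1 := by
  rw [one_of_mem hr, map_one]

lemma inl_of_mul_self (p : PairIdx n × ZMod 2) : (inl (of p) : GnP2Ext n) * inl (of p) = 1 := by
  obtain ⟨⟨s, hs⟩, ε⟩ := p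
  obtain ⟨i, j, h, rfl⟩ := Finset.card_eq_two.mp hs
  rw [← map_mul]
  exact inl_mk_eq_one (Or.inl ⟨i, j, h, ε, rfl⟩)

lemma inr_ofAdd_mul_self (v : Fin n → ZMod 2) :
    (inr (.ofAdd v) : GnP2Ext n) * inr (.ofAdd v) = 1 := by
  rw [← map_mul, ← ofAdd_add, ZModModule.add_self, ofAdd_zero, map_one]

lemma commute_inr_inl_of_parityShift_eq {v : Fin n → ZMod 2} {g : GnP2 n}
    (hg : parityShift v g = g) : Commute (inr (.ofAdd v) : GnP2Ext n) (inl g) := by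
  rw [Commute, SemiconjBy, ← mul_inv_eq_iff_eq_mul, ← map_inv, ← inl_aut, parityShiftAut_apply,
    hg]

def ofGnD2Gen : DIdx n → GnP2Ext n
  | .inl s => inl (of (s, 0))
  | .inr i => inr (.ofAdd (Pi.single i 1))

lemma ofGnD2Gen_mul_self (x : DIdx n) : ofGnD2Gen x * ofGnD2Gen x = 1 := by
  cases x with
  | inl s => exact inl_of_mul_self _
  | inr i => exact inr_ofAdd_mul_self _

lemma ofGnD2Gen_inv (x : DIdx n) : (ofGnD2Gen x)⁻¹ = ofGnD2Gen x :=
  inv_eq_of_mul_eq_one_right (ofGnD2Gen_mul_self x)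

lemma lift_ofGnD2Gen_eq_one : ∀ r ∈ gnD2Rels n, FreeGroup.lift ofGnD2Gen r = 1 := by
  rintro r (⟨i, j, h, rfl⟩ | ⟨i, j, k, l, hij, hkl, h₁, h₂, h₃, h₄, rfl⟩ |
    ⟨i, j, k, hij, hik, hjk, rfl⟩ | ⟨i, rfl⟩ | ⟨i, j, rfl⟩ | ⟨i, j, h, rfl⟩ |
    ⟨i, j, k, h, hki, hkj, rfl⟩) <;>
    simp only [map_mul, map_inv, FreeGroup.lift_apply_of, ofGnD2Gen]
  · exact inl_of_mul_self _
  · simpa [PresentedGroup.of] using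
      inl_mk_eq_one (Or.inr (Or.inl ⟨i, j, k, l, hij, hkl, 0, 0, h₁, h₂, h₃, h₄, rfl⟩))
  · simpa [PresentedGroup.of] using
      inl_mk_eq_one (Or.inr (Or.inr ⟨i, j, k, hij, hik, hjk, 0, 0, 0, by simp, rfl⟩))
  · exact inr_ofAdd_mul_self _
  · rw [((Commute.all _ _).map inr).eq]
    group
  · have hc : Commute (inr (.ofAdd (Pi.single i 1)) * inr (.ofAdd (Pi.single j 1)) : GnP2Ext n)
        (inl (of (mkPair i j h, 0))) := by
      rw [← map_mul, ← ofAdd_add]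
      exact commute_inr_inl_of_parityShift_eq
        (parityShift_of_mkPair_zero h (by simp [h, h.symm, ZModModule.add_self]))
    rw [hc.eq]
    simp only [mul_assoc, inr_ofAdd_mul_self, mul_one, mul_inv_cancel]
  · rw [← (commute_inr_inl_of_parityShift_eq
      (parityShift_of_mkPair_zero h (by simp [hki.symm, hkj.symm]))).eq]
    group

def ofGnD2 : GnD2 n →* GnP2Ext n :=
  PresentedGroup.toGroup lift_ofGnD2Gen_eq_one

lemma ofGnD2_mkD (L : List (DIdx n × Bool)) :
    ofGnD2 (mkD n L) = (L.map fun p => ofGnD2Gen p.1).prod := by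
  change FreeGroup.lift ofGnD2Gen (FreeGroup.mk L) = _
  simp [FreeGroup.lift_mk, ofGnD2Gen_inv]

end GnP2Ext

lemma chiWord_eq_parityShift_left (L : List (DIdx n × Bool)) (N : Fin n → ZMod 2) :
    chiWord n L N = parityShift N (GnP2Ext.ofGnD2 (mkD n L)).left := by
  rw [GnP2Ext.ofGnD2_mkD]
  induction L generalizing N with
  | nil => simp [chiWord]
  | cons p L ih =>
    obtain ⟨s | i, b⟩ := p
    · simp [chiWord, GnP2Ext.ofGnD2Gen, ih, parityShiftGen]
    · simp [chiWord, GnP2Ext.ofGnD2Gen, ih, parityShiftAut_apply, parityShift_add,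
        Function.update_add_eq_add_single]

end

theorem stmt7_general (n : ℕ) (L₁ L₂ : List (DIdx n × Bool))
    (h : mkD n L₁ = mkD n L₂) :
    chiWord n L₁ (fun _ => 0) = chiWord n L₂ (fun _ => 0) := by
  rw [chiWord_eq_parityShift_left, chiWord_eq_parityShift_left, h]

/-- the map `χ : H_{n,D}^2 → G_{n,P}^2` is well defined: its value on a word
(with each `τ_i` occurring an even number of times) depends only on the element of
`G_{n,D}^2` the word represents. -/
theorem stmt7 (n : ℕ) (hn : 2 < n) (L₁ L₂ : List (DIdx n × Bool))
    (hL₁ : ∀ i : Fin n, Even (tauCount i L₁))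
    (h : mkD n L₁ = mkD n L₂) :
    chiWord n L₁ (fun _ => 0) = chiWord n L₂ (fun _ => 0) :=
  stmt7_general n L₁ L₂ h
end

section
/- The assignment ω(a_{ij}) = a_{ij} if n+1 ∉ {i,j}, ω(a_{i(n+1)}) = τ_i, extends to a well-defined group homomorphism ω : G_{n+1}^2 → G_{n,D}^2. -/
/-! Relations of `G_{n+1}^2` not involving the point `n + 1` hold verbatim in `G_{n,D}^2`.
Sending `a_{i,n+1}` to `τ_i`, the far commutativity relations involving `n + 1` become
`a_{kl} τ_i = τ_i a_{kl}`, and the triple relations involving `n + 1` become rearrangements of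
`τ_i τ_j a_{ij} = a_{ij} τ_j τ_i`. This is the relation `τ_i τ_j a_{ij} τ_j τ_i = a_{ij}`, since the
`τ`'s are commuting involutions. -/

variable {n : ℕ}

theorem mkPair_comm {i j : Fin n} (h : i ≠ j) : mkPair i j h = mkPair j i h.symm :=
  Subtype.ext (Finset.pair_comm i j)

namespace PairIdx

variable {G : Type*}

def lift (f : Fin n → Fin n → G) (s : PairIdx n) : G :=
  have hs : s.1.Nonempty := Finset.card_pos.mp (by rw [s.2]; norm_num)
  f (s.1.min' hs) (s.1.max' hs)

theorem lift_mkPair {f : Fin n → Fin n → G} (hf : ∀ i j, f i j = f j i) {i j : Fin n}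
    (h : i ≠ j) : lift f (mkPair i j h) = f i j := by
  simp only [lift, mkPair, Finset.min'_pair, Finset.max'_pair]
  rcases le_total i j with hij | hji
  · rw [min_eq_left hij, max_eq_right hij]
  · rw [min_eq_right hji, max_eq_left hji, hf]

end PairIdx

theorem PresentedGroup.commute_of_mem {α : Type*} {rels : Set (FreeGroup α)} {x y : FreeGroup α}
    (h : x * y * x⁻¹ * y⁻¹ ∈ rels) : Commute (mk rels x) (mk rels y) := by
  rw [← commutatorElement_eq_one_iff_commute, commutatorElement_def]
  simp only [← map_inv, ← map_mul]
  exact one_of_mem h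

theorem AD_symm {i j : Fin n} (h : i ≠ j) : AD i j h = AD j i h.symm := by
  rw [AD, AD, mkPair_comm]

theorem AD_mul_self {i j : Fin n} (h : i ≠ j) : AD i j h * AD i j h = 1 :=
  PresentedGroup.one_of_mem (Or.inl ⟨i, j, h, rfl⟩)

theorem AD_commute {i j k l : Fin n} (hij : i ≠ j) (hkl : k ≠ l)
    (hik : i ≠ k) (hil : i ≠ l) (hjk : j ≠ k) (hjl : j ≠ l) :
    Commute (AD i j hij) (AD k l hkl) :=
  PresentedGroup.commute_of_mem (Or.inr (Or.inl ⟨i, j, k, l, hij, hkl, hik, hil, hjk, hjl, rfl⟩))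

theorem AD_triple {i j k : Fin n} (hij : i ≠ j) (hik : i ≠ k) (hjk : j ≠ k) :
    AD i j hij * AD i k hik * AD j k hjk = AD j k hjk * AD i k hik * AD i j hij :=
  PresentedGroup.mk_eq_mk_of_mul_inv_mem (Or.inr (Or.inr (Or.inl ⟨i, j, k, hij, hik, hjk, rfl⟩)))

theorem T_mul_self (i : Fin n) : T i * T i = 1 :=
  PresentedGroup.one_of_mem (Or.inr (Or.inr (Or.inr (Or.inl ⟨i, rfl⟩))))

theorem T_inv (i : Fin n) : (T i)⁻¹ = T i :=
  inv_eq_of_mul_eq_one_right (T_mul_self i)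

theorem T_commute (i j : Fin n) : Commute (T i) (T j) :=
  PresentedGroup.commute_of_mem (Or.inr (Or.inr (Or.inr (Or.inr (Or.inl ⟨i, j, rfl⟩)))))

theorem AD_commute_T {i j : Fin n} (h : i ≠ j) {k : Fin n} (hki : k ≠ i) (hkj : k ≠ j) :
    Commute (AD i j h) (T k) :=
  PresentedGroup.commute_of_mem
    (Or.inr (Or.inr (Or.inr (Or.inr (Or.inr (Or.inr ⟨i, j, k, h, hki, hkj, rfl⟩))))))

theorem T_mul_T_commute_AD {i j : Fin n} (h : i ≠ j) : Commute (T i * T j) (AD i j h) := by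
  have hrel : T i * T j * AD i j h * T j * T i = AD i j h :=
    PresentedGroup.mk_eq_mk_of_mul_inv_mem
      (Or.inr (Or.inr (Or.inr (Or.inr (Or.inr (Or.inl ⟨i, j, h, rfl⟩))))))
  calc T i * T j * AD i j h = T i * T j * AD i j h * T j * T i * (T i)⁻¹ * (T j)⁻¹ := by group
    _ = AD i j h * (T i * T j) := by rw [hrel, T_inv, T_inv, mul_assoc]

theorem T_mul_T_mul_AD {i j : Fin n} (h : i ≠ j) :
    T i * T j * AD i j h = AD i j h * T j * T i := by
  rw [(T_mul_T_commute_AD h).eq, (T_commute i j).eq, mul_assoc]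

theorem AD_mul_T_mul_T {i j : Fin n} (h : i ≠ j) :
    AD i j h * T i * T j = T j * T i * AD i j h := by
  rw [mul_assoc, ← (T_mul_T_commute_AD h).eq, (T_commute i j).eq]

theorem T_mul_AD_mul_T {i j : Fin n} (h : i ≠ j) :
    T i * AD i j h * T j = T j * AD i j h * T i :=
  calc T i * AD i j h * T j = T i * (AD i j h * T j * T i) * (T i)⁻¹ := by group
    _ = T j * AD i j h * T i := by
      rw [← T_mul_T_mul_AD h, T_inv, ← mul_assoc, ← mul_assoc, T_mul_self, one_mul]

/-- The image of `a_{ij}` under `ω`, as a function of the ordered pair `(i, j)`; the value `1` on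
the diagonal is junk. -/
def omegaGen (n : ℕ) (i j : Fin (n + 1)) : GnD2 n :=
  Fin.lastCases (Fin.lastCases 1 T j)
    (fun i => Fin.lastCases (T i) (fun j => if h : i = j then 1 else AD i j h) j) i

@[simp]
theorem omegaGen_last_castSucc (j : Fin n) : omegaGen n (Fin.last n) j.castSucc = T j := by
  simp [omegaGen]

@[simp]
theorem omegaGen_castSucc_last (i : Fin n) : omegaGen n i.castSucc (Fin.last n) = T i := by
  simp [omegaGen]

theorem omegaGen_castSucc_castSucc {i j : Fin n} (h : i ≠ j) :
    omegaGen n i.castSucc j.castSucc = AD i j h := by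
  simp [omegaGen, h]

theorem omegaGen_symm (i j : Fin (n + 1)) : omegaGen n i j = omegaGen n j i := by
  rcases i.eq_castSucc_or_eq_last with ⟨i, rfl⟩ | rfl <;>
    rcases j.eq_castSucc_or_eq_last with ⟨j, rfl⟩ | rfl
  · by_cases h : i = j
    · rw [h]
    · rw [omegaGen_castSucc_castSucc h, omegaGen_castSucc_castSucc (Ne.symm h), AD_symm]
  all_goals simp

theorem omegaGen_mul_self {i j : Fin (n + 1)} (h : i ≠ j) :
    omegaGen n i j * omegaGen n i j = 1 := by
  rcases i.eq_castSucc_or_eq_last with ⟨i, rfl⟩ | rfl <;>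
    rcases j.eq_castSucc_or_eq_last with ⟨j, rfl⟩ | rfl
  · rw [omegaGen_castSucc_castSucc (ne_of_apply_ne _ h), AD_mul_self]
  · rw [omegaGen_castSucc_last, T_mul_self]
  · rw [omegaGen_last_castSucc, T_mul_self]
  · exact absurd rfl h

theorem omegaGen_commute_AD {i j : Fin (n + 1)} (hij : i ≠ j) {k l : Fin n} (hkl : k ≠ l)
    (hik : i ≠ k.castSucc) (hil : i ≠ l.castSucc) (hjk : j ≠ k.castSucc)
    (hjl : j ≠ l.castSucc) : Commute (omegaGen n i j) (AD k l hkl) := by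
  rcases i.eq_castSucc_or_eq_last with ⟨i, rfl⟩ | rfl <;>
    rcases j.eq_castSucc_or_eq_last with ⟨j, rfl⟩ | rfl
  · rw [omegaGen_castSucc_castSucc (ne_of_apply_ne _ hij)]
    exact AD_commute _ _ (ne_of_apply_ne _ hik) (ne_of_apply_ne _ hil) (ne_of_apply_ne _ hjk)
      (ne_of_apply_ne _ hjl)
  · rw [omegaGen_castSucc_last]
    exact (AD_commute_T hkl (ne_of_apply_ne _ hik) (ne_of_apply_ne _ hil)).symm
  · rw [omegaGen_last_castSucc]
    exact (AD_commute_T hkl (ne_of_apply_ne _ hjk) (ne_of_apply_ne _ hjl)).symm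
  · exact absurd rfl hij

theorem omegaGen_commute {i j k l : Fin (n + 1)} (hij : i ≠ j) (hkl : k ≠ l)
    (hik : i ≠ k) (hil : i ≠ l) (hjk : j ≠ k) (hjl : j ≠ l) :
    Commute (omegaGen n i j) (omegaGen n k l) := by
  -- At most one of the four points is `last n`, so one of the two pairs avoids it.
  by_cases hkl_last : k ≠ Fin.last n ∧ l ≠ Fin.last n
  · obtain ⟨k, rfl⟩ := Fin.exists_castSucc_eq.mpr hkl_last.1
    obtain ⟨l, rfl⟩ := Fin.exists_castSucc_eq.mpr hkl_last.2
    rw [omegaGen_castSucc_castSucc (ne_of_apply_ne _ hkl)]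
    exact omegaGen_commute_AD hij _ hik hil hjk hjl
  · obtain ⟨i, rfl⟩ := Fin.exists_castSucc_eq.mpr fun h => hkl_last ⟨h ▸ hik.symm, h ▸ hil.symm⟩
    obtain ⟨j, rfl⟩ := Fin.exists_castSucc_eq.mpr fun h => hkl_last ⟨h ▸ hjk.symm, h ▸ hjl.symm⟩
    rw [omegaGen_castSucc_castSucc (ne_of_apply_ne _ hij)]
    exact (omegaGen_commute_AD hkl _ hik.symm hjk.symm hil.symm hjl.symm).symm

theorem omegaGen_triple {i j k : Fin (n + 1)} (hij : i ≠ j) (hik : i ≠ k) (hjk : j ≠ k) :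
    omegaGen n i j * omegaGen n i k * omegaGen n j k =
      omegaGen n j k * omegaGen n i k * omegaGen n i j := by
  rcases i.eq_castSucc_or_eq_last with ⟨i, rfl⟩ | rfl
  · rcases j.eq_castSucc_or_eq_last with ⟨j, rfl⟩ | rfl
    · rcases k.eq_castSucc_or_eq_last with ⟨k, rfl⟩ | rfl
      · simp only [omegaGen_castSucc_castSucc (ne_of_apply_ne _ hij),
          omegaGen_castSucc_castSucc (ne_of_apply_ne _ hik),
          omegaGen_castSucc_castSucc (ne_of_apply_ne _ hjk)]
        exact AD_triple _ _ _
      · simp only [omegaGen_castSucc_castSucc (ne_of_apply_ne _ hij), omegaGen_castSucc_last]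
        exact AD_mul_T_mul_T _
    · obtain ⟨k, rfl⟩ := Fin.exists_castSucc_eq.mpr hjk.symm
      simp only [omegaGen_castSucc_castSucc (ne_of_apply_ne _ hik), omegaGen_castSucc_last,
        omegaGen_last_castSucc]
      exact T_mul_AD_mul_T _
  · obtain ⟨j, rfl⟩ := Fin.exists_castSucc_eq.mpr hij.symm
    obtain ⟨k, rfl⟩ := Fin.exists_castSucc_eq.mpr hik.symm
    simp only [omegaGen_castSucc_castSucc (ne_of_apply_ne _ hjk), omegaGen_last_castSucc]
    exact T_mul_T_mul_AD _

theorem lift_omegaGen_eq_one :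
    ∀ r ∈ gn2Rels (n + 1), FreeGroup.lift (PairIdx.lift (omegaGen n)) r = 1 := by
  rintro r (⟨i, j, h, rfl⟩ | ⟨i, j, k, l, hij, hkl, hik, hil, hjk, hjl, rfl⟩ |
    ⟨i, j, k, hij, hik, hjk, rfl⟩) <;>
    simp only [map_mul, map_inv, FreeGroup.lift_apply_of, PairIdx.lift_mkPair omegaGen_symm]
  · exact omegaGen_mul_self h
  · exact commutatorElement_eq_one_iff_commute.mpr (omegaGen_commute hij hkl hik hil hjk hjl)
  · exact mul_inv_eq_one.mpr (omegaGen_triple hij hik hjk)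

def omega (n : ℕ) : Gn2 (n + 1) →* GnD2 n :=
  PresentedGroup.toGroup lift_omegaGen_eq_one

theorem omega_A2 {i j : Fin (n + 1)} (h : i ≠ j) : omega n (A2 i j h) = omegaGen n i j := by
  rw [omega, A2, PresentedGroup.toGroup.of, PairIdx.lift_mkPair omegaGen_symm]

theorem stmt10_general (n : ℕ) :
    ∃ ω : Gn2 (n + 1) →* GnD2 n,
      (∀ (i j : Fin n) (h : i ≠ j),
        ω (A2 i.castSucc j.castSucc ((Fin.castSucc_injective n).ne h)) = AD i j h) ∧
      (∀ i : Fin n,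
        ω (A2 i.castSucc (Fin.last n) (Fin.castSucc_lt_last i).ne) = T i) :=
  ⟨omega n, fun _ _ h => by rw [omega_A2, omegaGen_castSucc_castSucc h],
    fun i => by rw [omega_A2, omegaGen_castSucc_last]⟩

/-- the assignment `ω(a_{ij}) = a_{ij}` for `i,j ≤ n`, `ω(a_{i(n+1)}) = τ_i`,
extends to a well-defined homomorphism `ω : G_{n+1}^2 → G_{n,D}^2`. -/
theorem stmt10 (n : ℕ) (hn : 2 < n) :
    ∃ ω : Gn2 (n + 1) →* GnD2 n,
      (∀ (i j : Fin n) (h : i ≠ j),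
        ω (A2 i.castSucc j.castSucc ((Fin.castSucc_injective n).ne h)) = AD i j h) ∧
      (∀ i : Fin n,
        ω (A2 i.castSucc (Fin.last n) (Fin.castSucc_lt_last i).ne) = T i) :=
  stmt10_general n
end

section
/- The assignment κ(a_{ij}) = a_{ij} and κ(τ_i) = a_{i(n+1)} extends to a well-defined group homomorphism κ : G_{n,D}^2 → G_{n+1}^2 / N, where N is the normal closure of the relations a_{i(n+1)}a_{j(n+1)} = a_{j(n+1)}a_{i(n+1)} for all i ≠ j. -/
open scoped commutatorElement

/-- The forbidden relators: commutators `[a_{i(n+1)}, a_{j(n+1)}]` in `G_{n+1}^2`. -/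
def forbiddenRels (n : ℕ) : Set (Gn2 (n + 1)) :=
  {x | ∃ (i j : Fin n) (h : i ≠ j),
    x = ⁅A2 i.castSucc (Fin.last n) (Fin.castSucc_lt_last i).ne,
         A2 j.castSucc (Fin.last n) (Fin.castSucc_lt_last j).ne⁆}

/-- The quotient `G_{n+1}^2 / ⟨a_{i(n+1)}a_{j(n+1)} = a_{j(n+1)}a_{i(n+1)}⟩`. -/
abbrev Gn2Quot (n : ℕ) := Gn2 (n + 1) ⧸ Subgroup.normalClosure (forbiddenRels n)

/-- The projection `G_{n+1}^2 → G_{n+1}^2 / ⟨a_{i(n+1)}a_{j(n+1)} = a_{j(n+1)}a_{i(n+1)}⟩`. -/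
def toQuot (n : ℕ) : Gn2 (n + 1) →* Gn2Quot n :=
  QuotientGroup.mk' (Subgroup.normalClosure (forbiddenRels n))

/-! `κ` is defined on the free group over the generators of `G_{n,D}^2`, and each defining
relator is checked to vanish. Those among the `a_{ij}` are relations of `G_{n+1}^2`; `τ_i² = 1`
and `a_{ij} τ_k = τ_k a_{ij}` become `a_{i(n+1)}² = 1` and far commutativity; `τ_i τ_j = τ_j τ_i`
is exactly what `N` kills; and `τ_i τ_j a_{ij} τ_j τ_i = a_{ij}` follows from the triple relation
for `i, j, n+1` once `a_{i(n+1)}` and `a_{j(n+1)}` commute. -/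

section Gn2

variable {n : ℕ}

lemma A2_mul_self (i j : Fin n) (h : i ≠ j) : A2 i j h * A2 i j h = 1 := by
  have := PresentedGroup.one_of_mem (rels := gn2Rels n) (Or.inl ⟨i, j, h, rfl⟩)
  rwa [map_mul] at this

lemma A2_commute {i j k l : Fin n} (hij : i ≠ j) (hkl : k ≠ l)
    (hik : i ≠ k) (hil : i ≠ l) (hjk : j ≠ k) (hjl : j ≠ l) :
    Commute (A2 i j hij) (A2 k l hkl) := by
  have := PresentedGroup.one_of_mem (rels := gn2Rels n)
    (Or.inr (Or.inl ⟨i, j, k, l, hij, hkl, hik, hil, hjk, hjl, rfl⟩))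
  rw [map_mul, map_mul, map_mul, map_inv, map_inv, ← commutatorElement_def] at this
  exact commutatorElement_eq_one_iff_commute.1 this

lemma A2_triple (i j k : Fin n) (hij : i ≠ j) (hik : i ≠ k) (hjk : j ≠ k) :
    A2 i j hij * A2 i k hik * A2 j k hjk = A2 j k hjk * A2 i k hik * A2 i j hij := by
  have := PresentedGroup.one_of_mem (rels := gn2Rels n)
    (Or.inr (Or.inr ⟨i, j, k, hij, hik, hjk, rfl⟩))
  rwa [map_mul, map_mul, map_mul, map_inv, map_mul, map_mul, mul_inv_eq_one] at this

variable {H : Type*} [Group H] (φ : Gn2 n →* H)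

lemma map_A2_mul_self (i j : Fin n) (h : i ≠ j) : φ (A2 i j h) * φ (A2 i j h) = 1 := by
  rw [← map_mul, A2_mul_self, map_one]

lemma map_A2_triple (i j k : Fin n) (hij : i ≠ j) (hik : i ≠ k) (hjk : j ≠ k) :
    φ (A2 i j hij) * φ (A2 i k hik) * φ (A2 j k hjk) =
      φ (A2 j k hjk) * φ (A2 i k hik) * φ (A2 i j hij) := by
  simp only [← map_mul]
  rw [A2_triple]

end Gn2

lemma toQuot_commute_last {n : ℕ} (i j : Fin n) :
    Commute (toQuot n (A2 i.castSucc (Fin.last n) (Fin.castSucc_lt_last i).ne))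
      (toQuot n (A2 j.castSucc (Fin.last n) (Fin.castSucc_lt_last j).ne)) := by
  rcases eq_or_ne i j with rfl | h
  · exact Commute.refl _
  rw [← commutatorElement_eq_one_iff_commute, ← map_commutatorElement]
  exact (QuotientGroup.eq_one_iff _).2 (Subgroup.subset_normalClosure ⟨i, j, h, rfl⟩)

/-- `x * y` is an involution commuting with `c`, and `y * x` is its inverse. -/
lemma mul_mul_mul_mul_eq_of_commute {G : Type*} [Group G] {x y c : G} (hx : x * x = 1)
    (hy : y * y = 1) (hxy : Commute x y) (h : c * x * y = y * x * c) :
    x * y * c * y * x = c := by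
  rw [← hxy.eq] at h
  rw [← h, mul_assoc (c * x) y y, hy, mul_one, mul_assoc c x x, hx, mul_one]

def liftPair {n : ℕ} (s : PairIdx n) : PairIdx (n + 1) :=
  ⟨s.1.image Fin.castSucc, by
    rw [Finset.card_image_of_injective _ (Fin.castSucc_injective n)]; exact s.2⟩

lemma liftPair_mkPair {n : ℕ} (i j : Fin n) (h : i ≠ j) :
    liftPair (mkPair i j h) = mkPair i.castSucc j.castSucc ((Fin.castSucc_injective n).ne h) :=
  Subtype.ext (by simp [liftPair, mkPair])

def kappaGen (n : ℕ) : DIdx n → Gn2Quot n :=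
  Sum.elim (fun s => toQuot n (PresentedGroup.of (liftPair s)))
    (fun i => toQuot n (A2 i.castSucc (Fin.last n) (Fin.castSucc_lt_last i).ne))

lemma kappaGen_inl {n : ℕ} (i j : Fin n) (h : i ≠ j) :
    kappaGen n (Sum.inl (mkPair i j h)) =
      toQuot n (A2 i.castSucc j.castSucc ((Fin.castSucc_injective n).ne h)) := by
  rw [kappaGen, Sum.elim_inl, liftPair_mkPair]
  rfl

lemma kappaGen_inr {n : ℕ} (i : Fin n) :
    kappaGen n (Sum.inr i) = toQuot n (A2 i.castSucc (Fin.last n) (Fin.castSucc_lt_last i).ne) :=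
  rfl

lemma lift_kappaGen_eq_one {n : ℕ} {r : FreeGroup (DIdx n)} (hr : r ∈ gnD2Rels n) :
    FreeGroup.lift (kappaGen n) r = 1 := by
  have hne {i j : Fin n} (h : i ≠ j) := (Fin.castSucc_injective n).ne h
  have hlast (i : Fin n) := (Fin.castSucc_lt_last i).ne
  rcases hr with ⟨i, j, h, rfl⟩ | ⟨i, j, k, l, hij, hkl, hik, hil, hjk, hjl, rfl⟩ |
    ⟨i, j, k, hij, hik, hjk, rfl⟩ | ⟨i, rfl⟩ | ⟨i, j, rfl⟩ | ⟨i, j, h, rfl⟩ |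
    ⟨i, j, k, h, hki, hkj, rfl⟩ <;>
    simp only [map_mul, map_inv, FreeGroup.lift_apply_of, kappaGen_inl, kappaGen_inr]
  case inl => exact map_A2_mul_self _ _ _ _
  case inr.inl =>
    rw [← commutatorElement_def, commutatorElement_eq_one_iff_commute]
    exact (A2_commute _ _ (hne hik) (hne hil) (hne hjk) (hne hjl)).map _
  case inr.inr.inl => exact mul_inv_eq_one.2 (map_A2_triple _ _ _ _ _ _ _)
  case inr.inr.inr.inl => exact map_A2_mul_self _ _ _ _
  case inr.inr.inr.inr.inl =>
    rw [← commutatorElement_def, commutatorElement_eq_one_iff_commute]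
    exact toQuot_commute_last i j
  case inr.inr.inr.inr.inr.inl =>
    exact mul_inv_eq_one.2 <| mul_mul_mul_mul_eq_of_commute (map_A2_mul_self _ _ _ _)
      (map_A2_mul_self _ _ _ _) (toQuot_commute_last i j) (map_A2_triple _ _ _ _ _ _ _)
  case inr.inr.inr.inr.inr.inr =>
    rw [← commutatorElement_def, commutatorElement_eq_one_iff_commute]
    exact (A2_commute _ _ (hne hki.symm) (hlast i) (hne hkj.symm) (hlast j)).map _

def kappa (n : ℕ) : GnD2 n →* Gn2Quot n :=
  PresentedGroup.toGroup fun _ => lift_kappaGen_eq_one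

theorem stmt11_general (n : ℕ) :
    ∃ κ : GnD2 n →* Gn2Quot n,
      (∀ (i j : Fin n) (h : i ≠ j),
        κ (AD i j h) = toQuot n (A2 i.castSucc j.castSucc ((Fin.castSucc_injective n).ne h))) ∧
      (∀ i : Fin n,
        κ (T i) = toQuot n (A2 i.castSucc (Fin.last n) (Fin.castSucc_lt_last i).ne)) :=
  ⟨kappa n, fun i j h => (PresentedGroup.toGroup.of _).trans (kappaGen_inl i j h),
    fun _ => PresentedGroup.toGroup.of _⟩

/-- the assignment `κ(a_{ij}) = a_{ij}`, `κ(τ_i) = a_{i(n+1)}` extends to a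
well-defined homomorphism `κ : G_{n,D}^2 → G_{n+1}^2 / N`, `N` the normal closure of the
commutators `[a_{i(n+1)}, a_{j(n+1)}]`. -/
theorem stmt11 (n : ℕ) (hn : 2 < n) :
    ∃ κ : GnD2 n →* Gn2Quot n,
      (∀ (i j : Fin n) (h : i ≠ j),
        κ (AD i j h) = toQuot n (A2 i.castSucc j.castSucc ((Fin.castSucc_injective n).ne h))) ∧
      (∀ i : Fin n,
        κ (T i) = toQuot n (A2 i.castSucc (Fin.last n) (Fin.castSucc_lt_last i).ne)) :=
  stmt11_general n
end

section
/- The assignment q_m(a_{ijk}) = 1 if m ∈ {i,j,k}, and otherwise a_{ijk} with each index strictly greater than m decreased by 1, extends to a well-defined group homomorphism q_m : G_{n+1}^3 → G_n^3. -/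
/-!
`q_m` is restriction along the embedding `Fin.succAbove m : Fin n ↪ Fin (n + 1)`, and restriction
makes sense along any embedding `e`: send `a_s` to `a_{e⁻¹(s)}` when `s ⊆ range e` and to `1`
otherwise. This respects the relations. Involutions are clear; if `|s ∩ t| ≤ 1` then
also `|e⁻¹(s) ∩ e⁻¹(t)| ≤ 1`; and a tetrahedron relation on indices in `range e` is the
image of a tetrahedron relation, while one with an index outside `range e` has three of
its four generators killed and collapses to `x = x`.
-/

/-- A three-element set `{x,y,z}` has cardinality 3. -/
lemma card3 {α : Type*} [DecidableEq α] {x y z : α}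
    (hxy : x ≠ y) (hxz : x ≠ z) (hyz : y ≠ z) : ({x, y, z} : Finset α).card = 3 := by
  rw [Finset.card_insert_of_notMem (by simp [hxy, hxz]), Finset.card_pair hyz]

/-- Index type for the generators `a_{ijk}` of `G_n^3`: three-element subsets of `Fin n`. -/
abbrev TripIdx (n : ℕ) := {s : Finset (Fin n) // s.card = 3}

/-- The unordered triple `{i,j,k}` as an index. -/
def mkTrip {n : ℕ} (i j k : Fin n) (hij : i ≠ j) (hik : i ≠ k) (hjk : j ≠ k) : TripIdx n :=
  ⟨{i, j, k}, card3 hij hik hjk⟩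

/-- Relations of the group `G_n^3`: every generator is an involution, generators whose
index triples share at most one index commute, and the tetrahedron relation
`a_{ijk}a_{ijl}a_{ikl}a_{jkl} = a_{jkl}a_{ikl}a_{ijl}a_{ijk}` holds. -/
def gn3Rels (n : ℕ) : Set (FreeGroup (TripIdx n)) :=
  {r | (∃ s : TripIdx n, r = FreeGroup.of s * FreeGroup.of s) ∨
       (∃ s t : TripIdx n, (s.1 ∩ t.1).card ≤ 1 ∧
          r = FreeGroup.of s * FreeGroup.of t * (FreeGroup.of s)⁻¹ * (FreeGroup.of t)⁻¹) ∨
       (∃ (i j k l : Fin n) (hij : i ≠ j) (hik : i ≠ k) (hil : i ≠ l)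
          (hjk : j ≠ k) (hjl : j ≠ l) (hkl : k ≠ l),
          r = FreeGroup.of (mkTrip i j k hij hik hjk) * FreeGroup.of (mkTrip i j l hij hil hjl) *
              FreeGroup.of (mkTrip i k l hik hil hkl) * FreeGroup.of (mkTrip j k l hjk hjl hkl) *
              (FreeGroup.of (mkTrip j k l hjk hjl hkl) * FreeGroup.of (mkTrip i k l hik hil hkl) *
               FreeGroup.of (mkTrip i j l hij hil hjl) *
               FreeGroup.of (mkTrip i j k hij hik hjk))⁻¹)}

/-- The group `G_n^3`. -/
abbrev Gn3 (n : ℕ) := PresentedGroup (gn3Rels n)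

/-- The generator `a_{ijk}` of `G_n^3`, with `ℕ` indices (strands are numbered
`0,…,n-1`); junk value `1` if the indices are out of range or not distinct. -/
def a3 (n : ℕ) (i j k : ℕ) : Gn3 n :=
  if h : i < n ∧ j < n ∧ k < n ∧ i ≠ j ∧ i ≠ k ∧ j ≠ k then
    PresentedGroup.of (mkTrip ⟨i, h.1⟩ ⟨j, h.2.1⟩ ⟨k, h.2.2.1⟩
      (by simp [Fin.ext_iff, h.2.2.2.1]) (by simp [Fin.ext_iff, h.2.2.2.2.1])
      (by simp [Fin.ext_iff, h.2.2.2.2.2]))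
  else 1

/-- Index deletion: strand indices above `m` are shifted down by one. -/
def dl (m x : ℕ) : ℕ := if x < m then x else x - 1

/-- `qCond n m q` says that `q : G_{n+1}^3 → G_n^3` is the homomorphism `q_m`: it kills the
generators whose index triple contains `m` and reindexes the remaining ones. -/
def qCond (n m : ℕ) (q : Gn3 (n + 1) →* Gn3 n) : Prop :=
  ∀ i j k : ℕ, i < n + 1 → j < n + 1 → k < n + 1 → i ≠ j → i ≠ k → j ≠ k →
    q (a3 (n + 1) i j k) =
      if i = m ∨ j = m ∨ k = m then 1 else a3 n (dl m i) (dl m j) (dl m k)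

theorem a3_val {n : ℕ} (i j k : Fin n) (hij : i ≠ j) (hik : i ≠ k) (hjk : j ≠ k) :
    a3 n i j k = PresentedGroup.of (mkTrip i j k hij hik hjk) :=
  dif_pos ⟨i.2, j.2, k.2, Fin.val_ne_iff.2 hij, Fin.val_ne_iff.2 hik, Fin.val_ne_iff.2 hjk⟩

namespace Gn3

variable {n : ℕ}

theorem mk_eq_one_of_mem_rels {r : FreeGroup (TripIdx n)} (h : r ∈ gn3Rels n) :
    (QuotientGroup.mk r : Gn3 n) = 1 :=
  (QuotientGroup.eq_one_iff r).2 (Subgroup.subset_normalClosure h)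

theorem of_mul_self (s : TripIdx n) : (PresentedGroup.of s : Gn3 n) * PresentedGroup.of s = 1 :=
  mk_eq_one_of_mem_rels (Or.inl ⟨s, rfl⟩)

theorem of_commute {s t : TripIdx n} (h : (s.1 ∩ t.1).card ≤ 1) :
    Commute (PresentedGroup.of s : Gn3 n) (PresentedGroup.of t) := by
  have hrel : (PresentedGroup.of s : Gn3 n) * PresentedGroup.of t *
      (PresentedGroup.of s)⁻¹ * (PresentedGroup.of t)⁻¹ = 1 :=
    mk_eq_one_of_mem_rels (Or.inr (Or.inl ⟨s, t, h, rfl⟩))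
  rwa [mul_inv_eq_one, mul_inv_eq_iff_eq_mul] at hrel

theorem of_tetra (i j k l : Fin n) (hij : i ≠ j) (hik : i ≠ k) (hil : i ≠ l)
    (hjk : j ≠ k) (hjl : j ≠ l) (hkl : k ≠ l) :
    (PresentedGroup.of (mkTrip i j k hij hik hjk) : Gn3 n) *
        PresentedGroup.of (mkTrip i j l hij hil hjl) *
        PresentedGroup.of (mkTrip i k l hik hil hkl) *
        PresentedGroup.of (mkTrip j k l hjk hjl hkl) =
      PresentedGroup.of (mkTrip j k l hjk hjl hkl) *
        PresentedGroup.of (mkTrip i k l hik hil hkl) *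
        PresentedGroup.of (mkTrip i j l hij hil hjl) *
        PresentedGroup.of (mkTrip i j k hij hik hjk) :=
  mul_inv_eq_one.1 <|
    mk_eq_one_of_mem_rels (Or.inr (Or.inr ⟨i, j, k, l, hij, hik, hil, hjk, hjl, hkl, rfl⟩))

structure RelsHold {H : Type*} [Group H] (f : TripIdx n → H) : Prop where
  mul_self : ∀ s, f s * f s = 1
  commute : ∀ s t : TripIdx n, (s.1 ∩ t.1).card ≤ 1 → Commute (f s) (f t)
  tetra : ∀ (i j k l : Fin n) (hij : i ≠ j) (hik : i ≠ k) (hil : i ≠ l)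
    (hjk : j ≠ k) (hjl : j ≠ l) (hkl : k ≠ l),
    f (mkTrip i j k hij hik hjk) * f (mkTrip i j l hij hil hjl) *
        f (mkTrip i k l hik hil hkl) * f (mkTrip j k l hjk hjl hkl) =
      f (mkTrip j k l hjk hjl hkl) * f (mkTrip i k l hik hil hkl) *
        f (mkTrip i j l hij hil hjl) * f (mkTrip i j k hij hik hjk)

section lift

variable {H : Type*} [Group H] {f : TripIdx n → H}

theorem RelsHold.lift_eq_one (hf : RelsHold f) : ∀ r ∈ gn3Rels n, FreeGroup.lift f r = 1 := by
  rintro r (⟨s, rfl⟩ | ⟨s, t, hst, rfl⟩ | ⟨i, j, k, l, hij, hik, hil, hjk, hjl, hkl, rfl⟩)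
  · simpa using hf.mul_self s
  · simpa [mul_inv_eq_one, mul_inv_eq_iff_eq_mul] using (hf.commute s t hst).eq
  · rw [map_mul, map_inv, mul_inv_eq_one]
    simpa using hf.tetra i j k l hij hik hil hjk hjl hkl

def lift (hf : RelsHold f) : Gn3 n →* H :=
  PresentedGroup.toGroup hf.lift_eq_one

theorem lift_of (hf : RelsHold f) (s : TripIdx n) : lift hf (PresentedGroup.of s) = f s :=
  PresentedGroup.toGroup.of _

end lift

section restrict

variable {N : ℕ} (e : Fin n ↪ Fin N)

/-- `(e⁻¹(s)).card = 3` says `s ⊆ range e`. -/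
noncomputable def restrictGen (s : TripIdx N) : Gn3 n :=
  if h : (s.1.preimage e e.injective.injOn).card = 3 then PresentedGroup.of ⟨_, h⟩ else 1

theorem restrictGen_eq_one {s : TripIdx N} {x : Fin N} (hx : x ∈ s.1) (hxe : x ∉ Set.range e) :
    restrictGen e s = 1 := by
  classical
  refine dif_neg (ne_of_lt ?_)
  rw [Finset.card_preimage]
  exact (Finset.card_lt_card (Finset.filter_ssubset.2 ⟨x, hx, hxe⟩)).trans_eq s.2

theorem restrictGen_mkTrip_eq_one {x : Fin N} (hxe : x ∉ Set.range e) {i j k : Fin N}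
    (hx : x = i ∨ x = j ∨ x = k) (hij : i ≠ j) (hik : i ≠ k) (hjk : j ≠ k) :
    restrictGen e (mkTrip i j k hij hik hjk) = 1 :=
  restrictGen_eq_one e (by simpa [mkTrip] using hx) hxe

theorem restrictGen_mkTrip {i j k : Fin n}
    (hij : e i ≠ e j) (hik : e i ≠ e k) (hjk : e j ≠ e k) :
    restrictGen e (mkTrip (e i) (e j) (e k) hij hik hjk) =
      PresentedGroup.of (mkTrip i j k (ne_of_apply_ne e hij) (ne_of_apply_ne e hik)
        (ne_of_apply_ne e hjk)) := by
  set t := mkTrip i j k (ne_of_apply_ne e hij) (ne_of_apply_ne e hik) (ne_of_apply_ne e hjk)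
  have hmap : (mkTrip (e i) (e j) (e k) hij hik hjk).1 = t.1.map e := by simp [t, mkTrip]
  have hpre : (mkTrip (e i) (e j) (e k) hij hik hjk).1.preimage e e.injective.injOn = t.1 := by
    simp only [hmap, Finset.preimage_map]
  rw [restrictGen, dif_pos (hpre ▸ t.2)]
  congr 1
  exact Subtype.ext hpre

theorem restrictGen_relsHold : RelsHold (restrictGen e) where
  mul_self s := by
    unfold restrictGen
    split
    · exact of_mul_self _
    · exact one_mul 1
  commute s t hst := by
    unfold restrictGen
    split_ifs
    · refine of_commute ?_
      classical
      calc _ = ((s.1 ∩ t.1).preimage e e.injective.injOn).card :=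
          congrArg Finset.card (Finset.preimage_inter e.injective.injOn e.injective.injOn).symm
        _ ≤ (s.1 ∩ t.1).card := by rw [Finset.card_preimage]; exact Finset.card_filter_le _ _
        _ ≤ 1 := hst
    all_goals simp
  tetra i j k l hij hik hil hjk hjl hkl := by
    by_cases hi : i ∈ Set.range e; swap
    · simp [restrictGen_mkTrip_eq_one e hi]
    by_cases hj : j ∈ Set.range e; swap
    · simp [restrictGen_mkTrip_eq_one e hj]
    by_cases hk : k ∈ Set.range e; swap
    · simp [restrictGen_mkTrip_eq_one e hk]
    by_cases hl : l ∈ Set.range e; swap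
    · simp [restrictGen_mkTrip_eq_one e hl]
    obtain ⟨i, rfl⟩ := hi
    obtain ⟨j, rfl⟩ := hj
    obtain ⟨k, rfl⟩ := hk
    obtain ⟨l, rfl⟩ := hl
    simp only [restrictGen_mkTrip]
    exact of_tetra ..

noncomputable def restrict : Gn3 N →* Gn3 n :=
  lift (restrictGen_relsHold e)

theorem restrict_of (s : TripIdx N) : restrict e (PresentedGroup.of s) = restrictGen e s :=
  lift_of _ s

end restrict

end Gn3

theorem dl_succAbove {n : ℕ} (p : Fin (n + 1)) (i : Fin n) : dl p (p.succAbove i) = i := by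
  unfold dl Fin.succAbove
  split_ifs <;> simp_all [Fin.lt_def]
  omega

/-- the assignment `q_m(a_{ijk}) = 1` if `m ∈ {i,j,k}` and otherwise `a_{ijk}`
with indices above `m` decreased by one, extends to a well-defined homomorphism
`q_m : G_{n+1}^3 → G_n^3`. -/
theorem stmt14 (n : ℕ) (m : ℕ) (hm : m < n + 1) :
    ∃ q : Gn3 (n + 1) →* Gn3 n, qCond n m q := by
  obtain ⟨p, rfl⟩ : ∃ p : Fin (n + 1), p.val = m := ⟨⟨m, hm⟩, rfl⟩
  refine ⟨Gn3.restrict (Fin.succAboveEmb p), fun i j k hi hj hk hij hik hjk => ?_⟩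
  obtain ⟨i, rfl⟩ : ∃ i' : Fin (n + 1), i'.val = i := ⟨⟨i, hi⟩, rfl⟩
  obtain ⟨j, rfl⟩ : ∃ j' : Fin (n + 1), j'.val = j := ⟨⟨j, hj⟩, rfl⟩
  obtain ⟨k, rfl⟩ : ∃ k' : Fin (n + 1), k'.val = k := ⟨⟨k, hk⟩, rfl⟩
  rw [Fin.val_ne_iff] at hij hik hjk
  rw [a3_val i j k hij hik hjk, Gn3.restrict_of]
  simp only [Fin.val_inj]
  split_ifs with hp
  · have hpe : p ∉ Set.range (Fin.succAboveEmb p) := by simp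
    exact Gn3.restrictGen_mkTrip_eq_one _ hpe (by rcases hp with h | h | h <;> simp [h]) _ _ _
  · simp only [not_or] at hp
    obtain ⟨i, rfl⟩ : ∃ i', Fin.succAboveEmb p i' = i := Fin.exists_succAbove_eq hp.1
    obtain ⟨j, rfl⟩ : ∃ j', Fin.succAboveEmb p j' = j := Fin.exists_succAbove_eq hp.2.1
    obtain ⟨k, rfl⟩ : ∃ k', Fin.succAboveEmb p k' = k := Fin.exists_succAbove_eq hp.2.2
    rw [Gn3.restrictGen_mkTrip]
    simp only [Fin.coe_succAboveEmb, dl_succAbove]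
    exact (a3_val i j k _ _ _).symm
end
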